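/- arXiv:2107.08154 — 4 statements merged into one kernel-verified Lean document; each statement's English description precedes it below -/
import Mathlib

section
/- If G is a multigraph (with at least one vertex) and U is its underlying simple graph, then for every m, the minimum number of colorings over full m-fold covers satisfies P_DP(G,m) ≤ P_DP(U,m). -/
/-- A finite-multiplicity loopless multigraph on vertex set `V`:
`mult u v` is the number of parallel edges joining `u` and `v`. -/
structure Multigraph (V : Type) where
  mult : V → V → ℕ
  symm : ∀ u v, mult u v = mult v u
  loopless : ∀ v, mult v v = 0

/-- A full `m`-fold cover of a multigraph `G`.  The list of a vertex `u` is
identified with `{u} × Fin m`; for each ordered pair `(u,v)` and each edge index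
`i` (only indices `i < G.mult u v` are relevant) the corresponding perfect
matching between the two lists is recorded as a permutation of `Fin m`, the two
orientations of an edge giving inverse permutations. -/
structure FullCover {V : Type} (G : Multigraph V) (m : ℕ) where
  perm : V → V → ℕ → (Fin m ≃ Fin m)
  compat : ∀ u v i, perm v u i = (perm u v i).symm

/-- `f` (choosing one list element per vertex) is an `H`-coloring: it avoids all
cross edges of the cover. -/
def FullCover.IsColoring {V : Type} {G : Multigraph V} {m : ℕ}
    (c : FullCover G m) (f : V → Fin m) : Prop :=
  ∀ u v i, i < G.mult u v → (c.perm u v i) (f u) ≠ f v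

/-- The number of `H`-colorings of `G` for the cover `c`. -/
noncomputable def FullCover.numColorings {V : Type} {G : Multigraph V} {m : ℕ}
    (c : FullCover G m) : ℕ :=
  Nat.card {f : V → Fin m // c.IsColoring f}

/-- The DP color function: the minimum number of colorings over all full
`m`-fold covers. -/
noncomputable def Multigraph.PDP {V : Type} (G : Multigraph V) (m : ℕ) : ℕ :=
  sInf {n | ∃ c : FullCover G m, n = c.numColorings}

/-- The dual DP color function: the maximum number of colorings over all full
`m`-fold covers. -/
noncomputable def Multigraph.PDPdual {V : Type} (G : Multigraph V) (m : ℕ) : ℕ :=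
  sSup {n | ∃ c : FullCover G m, n = c.numColorings}

/-- The number of proper `m`-colorings of (the underlying graph of) `G`. -/
noncomputable def Multigraph.properCount {V : Type} (G : Multigraph V) (m : ℕ) : ℕ :=
  Nat.card {f : V → Fin m // ∀ u v, 0 < G.mult u v → f u ≠ f v}

/-- The underlying simple graph of a multigraph, viewed as a multigraph:
all parallel edges are merged into a single edge. -/
def Multigraph.underlying {V : Type} (G : Multigraph V) : Multigraph V where
  mult u v := min (G.mult u v) 1
  symm := by intro u v; (try dsimp only); rw [G.symm]
  loopless := by intro v; simp [G.loopless]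


namespace FullCover

variable {V : Type} {G : Multigraph V} {m : ℕ}

/-- Parallel copies of one matching forbid nothing new, so this cover of `G` has exactly
the colorings of `c`. -/
def ofUnderlying (c : FullCover G.underlying m) : FullCover G m where
  perm u v _ := c.perm u v 0
  compat u v _ := c.compat u v 0

theorem isColoring_ofUnderlying_iff (c : FullCover G.underlying m) (f : V → Fin m) :
    c.ofUnderlying.IsColoring f ↔ c.IsColoring f := by
  have hmult : ∀ u v, G.underlying.mult u v = min (G.mult u v) 1 := fun _ _ => rfl
  constructor
  · intro h u v i hi
    rw [hmult] at hi
    obtain rfl : i = 0 := by omega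
    exact h u v 0 (by omega)
  · intro h u v _ hi
    exact h u v 0 (by rw [hmult]; omega)

theorem numColorings_ofUnderlying (c : FullCover G.underlying m) :
    c.ofUnderlying.numColorings = c.numColorings := by
  unfold numColorings
  simp only [isColoring_ofUnderlying_iff]

end FullCover

namespace Multigraph

variable {V : Type}

theorem PDP_le_numColorings {G : Multigraph V} {m : ℕ} (c : FullCover G m) :
    G.PDP m ≤ c.numColorings :=
  Nat.sInf_le ⟨c, rfl⟩

theorem exists_numColorings_eq_PDP (G : Multigraph V) (m : ℕ) :
    ∃ c : FullCover G m, c.numColorings = G.PDP m := by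
  let trivialCover : FullCover G m := ⟨fun _ _ _ => Equiv.refl _, fun _ _ _ => rfl⟩
  obtain ⟨c, hc⟩ : G.PDP m ∈ {n | ∃ c : FullCover G m, n = c.numColorings} :=
    Nat.sInf_mem ⟨_, trivialCover, rfl⟩
  exact ⟨c, hc.symm⟩

end Multigraph

theorem PDP_le_PDP_underlying_general {V : Type}
    (G : Multigraph V) (m : ℕ) :
    G.PDP m ≤ G.underlying.PDP m := by
  obtain ⟨c, hc⟩ := G.underlying.exists_numColorings_eq_PDP m
  calc G.PDP m ≤ c.ofUnderlying.numColorings := Multigraph.PDP_le_numColorings _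
    _ = G.underlying.PDP m := by rw [FullCover.numColorings_ofUnderlying, hc]

/-- The DP color function of a multigraph is at most the DP color function of
its underlying simple graph. -/
theorem PDP_le_PDP_underlying {V : Type} [Fintype V] [Nonempty V]
    (G : Multigraph V) (m : ℕ) :
    G.PDP m ≤ G.underlying.PDP m :=
  PDP_le_PDP_underlying_general G m
end

section
/- Suppose G is a multigraph with a pendant vertex v of degree k ≥ 1, and let G' = G - v. Then for every m ≥ k, P*_DP(G,m) = (m-1)·P*_DP(G',m). -/
/-- The multigraph obtained from `G` by deleting the vertex `v` (and all edges
incident to it). -/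
def Multigraph.deleteVertex {V : Type} (G : Multigraph V) (v : V) :
    Multigraph {x : V // x ≠ v} where
  mult a b := G.mult a.1 b.1
  symm := by intro a b; (try dsimp only); rw [G.symm]
  loopless := by intro a; (try dsimp only); rw [G.loopless]

lemma Nat.card_subtype_ne {α : Type*} [Finite α] (b : α) :
    Nat.card {a : α // a ≠ b} = Nat.card α - 1 := by
  have := Fintype.ofFinite α
  classical
  simp [Nat.card_eq_fintype_card, Fintype.card_subtype_compl]

lemma Nat.card_extend_ne {V α : Type*} [Finite V] [Finite α] (v : V)
    (P : ({x // x ≠ v} → α) → Prop) (x : ({x // x ≠ v} → α) → α) :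
    Nat.card {f : V → α // P (fun y => f y) ∧ f v ≠ x (fun y => f y)} =
      (Nat.card α - 1) * Nat.card {g // P g} := by
  classical
  have := Fintype.ofFinite {g // P g}
  let s := Equiv.funSplitAt v α
  have split_symm (a : α) (g : {x // x ≠ v} → α) :
      s.symm (a, g) v = a ∧ (fun y : {x // x ≠ v} => s.symm (a, g) y) = g :=
    Prod.ext_iff.mp (s.apply_symm_apply (a, g))
  let e : {f : V → α // P (fun y => f y) ∧ f v ≠ x (fun y => f y)} ≃
      Σ g : {g // P g}, {a : α // a ≠ x g} :=
    { toFun f := ⟨⟨fun y => f.1 y, f.2.1⟩, ⟨f.1 v, f.2.2⟩⟩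
      invFun p := ⟨s.symm (p.2, p.1), by
        rw [(split_symm _ _).1, (split_symm _ _).2]; exact ⟨p.1.2, p.2.2⟩⟩
      left_inv f := Subtype.ext (s.symm_apply_apply f.1)
      right_inv p := by
        ext
        · exact congrFun (split_symm _ _).2 _
        · exact (split_symm _ _).1 }
  rw [Nat.card_congr e, Nat.card_sigma]
  simp [Nat.card_subtype_ne, mul_comm]

lemma Multigraph.ne_of_mult_pos {V : Type} (G : Multigraph V) {u v : V}
    (h : 0 < G.mult u v) : u ≠ v := by
  rintro rfl
  simp [G.loopless] at h

namespace FullCover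

variable {V : Type} {G : Multigraph V} {m : ℕ}

instance : Nonempty (FullCover G m) :=
  ⟨⟨fun _ _ _ => Equiv.refl _, fun _ _ _ => rfl⟩⟩

def restrict (c : FullCover G m) (v : V) : FullCover (G.deleteVertex v) m where
  perm a b i := c.perm a b i
  compat a b i := c.compat a b i

def extend [DecidableEq V] (v : V) (c' : FullCover (G.deleteVertex v) m) : FullCover G m where
  perm a b i := if h : a ≠ v ∧ b ≠ v then c'.perm ⟨a, h.1⟩ ⟨b, h.2⟩ i else Equiv.refl _
  compat a b i := by
    by_cases h : a ≠ v ∧ b ≠ v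
    · rw [dif_pos h, dif_pos h.symm]
      exact c'.compat _ _ i
    · rw [dif_neg h, dif_neg (mt And.symm h)]
      rfl

@[simp]
lemma restrict_extend [DecidableEq V] (v : V) (c' : FullCover (G.deleteVertex v) m) :
    (extend v c').restrict v = c' := by
  cases c'
  simp only [restrict, extend, mk.injEq]
  funext a b i
  rw [dif_pos ⟨a.2, b.2⟩]

lemma extend_perm_right [DecidableEq V] (v : V) (c' : FullCover (G.deleteVertex v) m)
    (a : V) (i : ℕ) : (extend v c').perm a v i = Equiv.refl _ :=
  dif_neg fun h => h.2 rfl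

lemma IsColoring.restrict {c : FullCover G m} {f : V → Fin m} (hf : c.IsColoring f) (v : V) :
    (c.restrict v).IsColoring (fun y => f y) :=
  fun a b i hi => hf a b i hi

lemma isColoring_iff_of_pendant {c : FullCover G m} {u v : V}
    (hpend : ∀ w, w ≠ u → G.mult v w = 0) {f : V → Fin m} :
    c.IsColoring f ↔
      (c.restrict v).IsColoring (fun y => f y) ∧ ∀ i < G.mult u v, c.perm u v i (f u) ≠ f v := by
  refine ⟨fun hf => ⟨hf.restrict v, fun i hi => hf u v i hi⟩, ?_⟩
  rintro ⟨hres, hv⟩ a b i hi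
  by_cases ha : a = v
  · subst ha
    obtain rfl : b = u := by_contra fun hb => Nat.not_lt_zero i (hpend b hb ▸ hi)
    rw [c.compat, Ne, Equiv.symm_apply_eq, eq_comm]
    exact hv i (G.symm a b ▸ hi)
  by_cases hb : b = v
  · subst hb
    obtain rfl : a = u := by_contra fun ha =>
      Nat.not_lt_zero i (by rwa [G.symm, hpend a ha] at hi)
    exact hv i hi
  · exact hres ⟨a, ha⟩ ⟨b, hb⟩ i hi

variable [Finite V]

lemma numColorings_le_pow (c : FullCover G m) : c.numColorings ≤ m ^ Nat.card V := by
  simpa [numColorings, Nat.card_fun] using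
    Nat.card_le_card_of_injective _ (Subtype.val_injective (p := c.IsColoring))

lemma bddAbove_numColorings : BddAbove {n | ∃ c : FullCover G m, n = c.numColorings} :=
  ⟨m ^ Nat.card V, by rintro n ⟨c, rfl⟩; exact c.numColorings_le_pow⟩

lemma numColorings_le_PDPdual (c : FullCover G m) : c.numColorings ≤ G.PDPdual m :=
  le_csSup bddAbove_numColorings ⟨c, rfl⟩

lemma exists_numColorings_eq_PDPdual : ∃ c : FullCover G m, c.numColorings = G.PDPdual m := by
  obtain ⟨c, hc⟩ := Nat.sSup_mem (s := {n | ∃ c : FullCover G m, n = c.numColorings})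
    ⟨_, Classical.arbitrary _, rfl⟩ bddAbove_numColorings
  exact ⟨c, hc.symm⟩

lemma numColorings_le_mul_restrict {u v : V} (huv : 0 < G.mult u v) (c : FullCover G m) :
    c.numColorings ≤ (m - 1) * (c.restrict v).numColorings := by
  have hne := G.ne_of_mult_pos huv
  calc c.numColorings
      ≤ Nat.card {f : V → Fin m // (c.restrict v).IsColoring (fun y => f y) ∧
          f v ≠ c.perm u v 0 (f u)} :=
        Nat.card_le_card_of_injective _ (Subtype.impEmbedding _ _
          fun f hf => ⟨hf.restrict v, (hf u v 0 huv).symm⟩).injective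
    _ = (m - 1) * (c.restrict v).numColorings := by
        rw [Nat.card_extend_ne v _ (fun g => c.perm u v 0 (g ⟨u, hne⟩)), Nat.card_fin]
        rfl

lemma numColorings_extend [DecidableEq V] {u v : V} (huv : 0 < G.mult u v)
    (hpend : ∀ w, w ≠ u → G.mult v w = 0) (c' : FullCover (G.deleteVertex v) m) :
    (extend v c').numColorings = (m - 1) * c'.numColorings := by
  have hne := G.ne_of_mult_pos huv
  have hcol (f : V → Fin m) :
      (extend v c').IsColoring f ↔ c'.IsColoring (fun y => f y) ∧ f v ≠ f u := by
    simp only [isColoring_iff_of_pendant hpend, restrict_extend, extend_perm_right,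
      Equiv.refl_apply]
    exact and_congr_right fun _ => ⟨fun h => (h 0 huv).symm, fun h _ _ => h.symm⟩
  rw [numColorings, Nat.card_congr (Equiv.subtypeEquivRight hcol),
    Nat.card_extend_ne v _ (fun g => g ⟨u, hne⟩), Nat.card_fin]
  rfl

end FullCover

theorem PDPdual_pendant_general {V : Type} [Fintype V] [DecidableEq V]
    (G : Multigraph V) (u v : V) (k : ℕ) (hk : 1 ≤ k)
    (hdeg : G.mult v u = k) (hpend : ∀ w, w ≠ u → G.mult v w = 0)
    (m : ℕ) :
    G.PDPdual m = (m - 1) * (G.deleteVertex v).PDPdual m := by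
  have huv : 0 < G.mult u v := by rw [G.symm, hdeg]; exact hk
  apply le_antisymm
  · obtain ⟨c, hc⟩ := FullCover.exists_numColorings_eq_PDPdual (G := G) (m := m)
    rw [← hc]
    exact (c.numColorings_le_mul_restrict huv).trans
      (Nat.mul_le_mul_left _ ((c.restrict v).numColorings_le_PDPdual))
  · obtain ⟨c', hc'⟩ := FullCover.exists_numColorings_eq_PDPdual (G := G.deleteVertex v) (m := m)
    rw [← hc', ← FullCover.numColorings_extend huv hpend]
    exact FullCover.numColorings_le_PDPdual _

/-- If `v` is a pendant vertex of degree `k ≥ 1` in the multigraph `G` and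
`G' = G - v`, then for every `m ≥ k`, `P*_DP(G,m) = (m-1)·P*_DP(G',m)`. -/
theorem PDPdual_pendant {V : Type} [Fintype V] [DecidableEq V]
    (G : Multigraph V) (u v : V) (k : ℕ) (hk : 1 ≤ k) (huv : u ≠ v)
    (hdeg : G.mult v u = k) (hpend : ∀ w, w ≠ u → G.mult v w = 0)
    (m : ℕ) (hm : k ≤ m) :
    G.PDPdual m = (m - 1) * (G.deleteVertex v).PDPdual m :=
  PDPdual_pendant_general G u v k hk hdeg hpend m
end

section
/- Let G be a multigraph, H = (L,H,M) a full m-fold cover of G, and e an edge with endpoints u,v such that for every other edge f between u and v, no edge of M(f) has the same pair of endpoints as any edge of M(e). Then P_DP(G,H) = P_DP(G-e, H-e) - P_DP(G·e, H·e). -/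
/-- The multigraph obtained from `G` by deleting one of the edges joining
`u` and `v`. -/
def Multigraph.deleteEdge {V : Type} [DecidableEq V] (G : Multigraph V) (u v : V) :
    Multigraph V where
  mult x y := if (x = u ∧ y = v) ∨ (x = v ∧ y = u) then G.mult x y - 1 else G.mult x y
  symm := by
    intro x y
    try dsimp only
    by_cases h : (x = u ∧ y = v) ∨ (x = v ∧ y = u)
    · rw [if_pos h, if_pos (by tauto), G.symm]
    · rw [if_neg h, if_neg (by tauto), G.symm]
  loopless := by
    intro x
    try dsimp only
    by_cases h : (x = u ∧ x = v) ∨ (x = v ∧ x = u)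
    · rw [if_pos h, G.loopless]
    · rw [if_neg h, G.loopless]

/-- The multigraph obtained from `G` by contracting an edge joining `u` and `v`:
the vertex `v` is removed, the merged vertex is `u`, loops created at the merged
vertex are deleted, and all other parallel edges are retained. -/
def Multigraph.contractEdge {V : Type} [DecidableEq V] (G : Multigraph V) (u v : V) :
    Multigraph {x : V // x ≠ v} where
  mult x y :=
    if x.1 = u ∧ y.1 = u then 0
    else if x.1 = u then G.mult u y.1 + G.mult v y.1
    else if y.1 = u then G.mult x.1 u + G.mult x.1 v
    else G.mult x.1 y.1
  symm := by
    intro x y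
    try dsimp only
    by_cases h1 : x.1 = u <;> by_cases h2 : y.1 = u <;>
      simp only [h1, h2, and_true, and_false, true_and, false_and, if_true, if_false,
        ite_true, ite_false, if_pos, if_neg, not_false_iff] <;>
      first
        | rfl
        | (rw [G.symm u, G.symm v])
        | rw [G.symm]
  loopless := by
    intro x
    try dsimp only
    by_cases h : x.1 = u
    · rw [if_pos ⟨h, h⟩]
    · rw [if_neg (by tauto), if_neg h, if_neg h, G.loopless]

/-- The cover of `G - e` induced by a cover of `G`, where `e` is the `i`-th edge
joining `u` and `v`: the matching of `e` is deleted and the remaining matchings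
between the lists of `u` and `v` are reindexed. -/
def FullCover.deleteEdge {V : Type} [DecidableEq V] {G : Multigraph V} {m : ℕ}
    (c : FullCover G m) (u v : V) (i : ℕ) : FullCover (G.deleteEdge u v) m where
  perm x y j :=
    if (x = u ∧ y = v) ∨ (x = v ∧ y = u) then
      c.perm x y (if j < i then j else j + 1)
    else c.perm x y j
  compat := by
    intro x y j
    try dsimp only
    by_cases h : (x = u ∧ y = v) ∨ (x = v ∧ y = u)
    · rw [if_pos (by tauto), if_pos h, c.compat]
    · rw [if_neg (by tauto), if_neg h, c.compat]

/-- The cover of `G · e` induced by a cover of `G`, where `e` is the `i`-th edge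
joining `u` and `v`: the lists of `u` and `v` are merged along the matching of
`e` (with the merged vertex labelled `u`), and all other matchings are carried
over accordingly. -/
def FullCover.contractEdge {V : Type} [DecidableEq V] {G : Multigraph V} {m : ℕ}
    (c : FullCover G m) (u v : V) (i : ℕ) : FullCover (G.contractEdge u v) m where
  perm x y j :=
    if x.1 = u ∧ y.1 = u then Equiv.refl _
    else if x.1 = u then
      (if j < G.mult u y.1 then c.perm u y.1 j
       else (c.perm u v i).trans (c.perm v y.1 (j - G.mult u y.1)))
    else if y.1 = u then
      (if j < G.mult x.1 u then c.perm x.1 u j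
       else (c.perm x.1 v (j - G.mult x.1 u)).trans (c.perm u v i).symm)
    else c.perm x.1 y.1 j
  compat := by
    intro x y j
    try dsimp only
    by_cases h1 : x.1 = u <;> by_cases h2 : y.1 = u <;>
      simp only [h1, h2, and_true, and_false, true_and, false_and, if_true, if_false,
        ite_true, ite_false, not_false_iff]
    · rfl
    · rw [G.symm y.1 u]
      by_cases hj : j < G.mult u y.1
      · rw [if_pos hj, if_pos hj, c.compat]
      · rw [if_neg hj, if_neg hj, c.compat]
        rfl
    · rw [G.symm x.1 u]
      by_cases hj : j < G.mult u x.1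
      · rw [if_pos hj, if_pos hj, c.compat]
      · rw [if_neg hj, if_neg hj, c.compat x.1 v (j - G.mult u x.1)]
        rfl
    · rw [c.compat]

/-!
Split the colorings `f` of `G - e` according to whether `f` uses the matching edge of `e`,
i.e. whether `f v` is the partner of `f u` under that matching. Those that do not are
exactly the colorings of `G`. Those that do are determined by their restriction to the
vertices other than `v`, and this restriction is a coloring of `G · e`: the constraints at
the merged vertex are those of `u` together with those of `v` transported along the matching
of `e`, while the constraints from the other `u`–`v` matchings hold automatically by the
disjointness hypothesis.
-/

theorem Multigraph.ne_of_lt_mult {V : Type} {G : Multigraph V} {u v : V} {i : ℕ}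
    (hi : i < G.mult u v) : u ≠ v := by
  rintro rfl
  rw [G.loopless] at hi
  exact Nat.not_lt_zero i hi

theorem Multigraph.mult_eq_of_pair {V : Type} (G : Multigraph V) {u v x y : V}
    (h : (x = u ∧ y = v) ∨ (x = v ∧ y = u)) : G.mult x y = G.mult u v := by
  rcases h with ⟨rfl, rfl⟩ | ⟨rfl, rfl⟩
  exacts [rfl, G.symm _ _]

theorem Nat.forall_lt_add_iff {a b : ℕ} {p : ℕ → Prop} :
    (∀ j < a + b, p j) ↔ (∀ j < a, p j) ∧ ∀ j < b, p (a + j) := by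
  refine ⟨fun h => ⟨fun j hj => h j (by omega), fun j hj => h (a + j) (by omega)⟩,
    fun ⟨ha, hb⟩ j hj => ?_⟩
  rcases lt_or_ge j a with hja | hja
  · exact ha j hja
  · simpa [Nat.add_sub_cancel' hja] using hb (j - a) (by omega)

def Equiv.subtypeApplyEqEquivRestrict {V α : Type*} [DecidableEq V] {u v : V} (huv : u ≠ v)
    (φ : α → α) : {f : V → α // φ (f u) = f v} ≃ ({x : V // x ≠ v} → α) where
  toFun f x := f.1 x
  invFun g := ⟨fun x => if h : x = v then φ (g ⟨u, huv⟩) else g ⟨x, h⟩, by simp [huv]⟩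
  left_inv f := by
    ext x
    by_cases h : x = v
    · subst h
      simp [← f.2]
    · simp [h]
  right_inv g := by
    funext x
    simp [x.2]

namespace FullCover

variable {V : Type} {G : Multigraph V} {m : ℕ} (c : FullCover G m)

theorem perm_apply_ne_comm (x y : V) (j : ℕ) (a b : Fin m) :
    c.perm x y j a ≠ b ↔ c.perm y x j b ≠ a := by
  rw [c.compat y x, ne_eq, ne_eq, Equiv.symm_apply_eq, eq_comm]

variable [DecidableEq V] {u v : V} {i : ℕ}

theorem isColoring_deleteEdge_iff (hi : i < G.mult u v) (f : V → Fin m) :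
    (c.deleteEdge u v i).IsColoring f ↔ ∀ x y j, j < G.mult x y →
      ((x = u ∧ y = v) ∨ (x = v ∧ y = u) → j ≠ i) → c.perm x y j (f x) ≠ f y := by
  constructor
  · intro hf x y j hj hji
    by_cases huv : (x = u ∧ y = v) ∨ (x = v ∧ y = u)
    · have hji := hji huv
      rw [G.mult_eq_of_pair huv] at hj
      have := hf x y (if j < i then j else j - 1) (by
        simp only [Multigraph.deleteEdge, if_pos huv, G.mult_eq_of_pair huv]
        split_ifs <;> omega)
      simp only [FullCover.deleteEdge, if_pos huv] at this
      convert this using 3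
      split_ifs <;> omega
    · simpa [FullCover.deleteEdge, huv] using
        hf x y j (by simpa [Multigraph.deleteEdge, huv] using hj)
  · intro hf x y j hj
    by_cases huv : (x = u ∧ y = v) ∨ (x = v ∧ y = u)
    · simp only [Multigraph.deleteEdge, if_pos huv] at hj
      simp only [FullCover.deleteEdge, if_pos huv]
      exact hf x y _ (by split_ifs <;> omega) (fun _ => by split_ifs <;> omega)
    · simp only [Multigraph.deleteEdge, if_neg huv] at hj
      simpa [FullCover.deleteEdge, huv] using hf x y j hj (absurd · huv)

theorem isColoring_iff_isColoring_deleteEdge (hi : i < G.mult u v) (f : V → Fin m) :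
    c.IsColoring f ↔ (c.deleteEdge u v i).IsColoring f ∧ c.perm u v i (f u) ≠ f v := by
  rw [c.isColoring_deleteEdge_iff hi]
  constructor
  · intro hf
    exact ⟨fun x y j hj _ => hf x y j hj, hf u v i hi⟩
  · rintro ⟨hf, he⟩ x y j hj
    by_cases hji : (x = u ∧ y = v) ∨ (x = v ∧ y = u) → j ≠ i
    · exact hf x y j hj hji
    · push Not at hji
      obtain ⟨⟨rfl, rfl⟩ | ⟨rfl, rfl⟩, rfl⟩ := hji
      exacts [he, (c.perm_apply_ne_comm _ _ _ _ _).mpr he]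

section Contract

variable {x y : {x : V // x ≠ v}}

theorem _root_.Multigraph.contractEdge_mult_of_ne (hx : x.1 ≠ u) (hy : y.1 ≠ u) :
    (G.contractEdge u v).mult x y = G.mult x y := by
  simp [Multigraph.contractEdge, hx, hy]

theorem contractEdge_perm_of_ne (hx : x.1 ≠ u) (hy : y.1 ≠ u) (j : ℕ) :
    (c.contractEdge u v i).perm x y j = c.perm x y j := by
  simp [FullCover.contractEdge, hx, hy]

theorem _root_.Multigraph.contractEdge_mult_self (hx : x.1 = u) (hy : y.1 = u) :
    (G.contractEdge u v).mult x y = 0 := by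
  simp [Multigraph.contractEdge, hx, hy]

theorem _root_.Multigraph.contractEdge_mult_left (hx : x.1 = u) (hy : y.1 ≠ u) :
    (G.contractEdge u v).mult x y = G.mult u y + G.mult v y := by
  simp [Multigraph.contractEdge, hx, hy]

theorem contractEdge_perm_left (hx : x.1 = u) (hy : y.1 ≠ u) (j : ℕ) :
    (c.contractEdge u v i).perm x y j = if j < G.mult u y then c.perm u y j
      else (c.perm u v i).trans (c.perm v y (j - G.mult u y)) := by
  simp [FullCover.contractEdge, hx, hy]

theorem forall_contractEdge_left_iff {f : V → Fin m} (hfv : c.perm u v i (f u) = f v)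
    (hx : x.1 = u) (hy : y.1 ≠ u) :
    (∀ j < (G.contractEdge u v).mult x y, (c.contractEdge u v i).perm x y j (f x) ≠ f y) ↔
      (∀ j < G.mult u y, c.perm u y j (f u) ≠ f y) ∧
        ∀ j < G.mult v y, c.perm v y j (f v) ≠ f y := by
  rw [G.contractEdge_mult_left hx hy, Nat.forall_lt_add_iff]
  simp +contextual [c.contractEdge_perm_left hx hy, hx, ← hfv]

end Contract

theorem isColoring_contractEdge_iff (huv : u ≠ v) {f : V → Fin m}
    (hfv : c.perm u v i (f u) = f v) :
    (c.contractEdge u v i).IsColoring (fun x => f x) ↔ ∀ x y j, j < G.mult x y →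
      ¬((x = u ∧ y = v) ∨ (x = v ∧ y = u)) → c.perm x y j (f x) ≠ f y := by
  constructor
  · intro hK x y j hj hnp
    have hxy : x ≠ y := G.ne_of_lt_mult hj
    wlog hy : y ≠ u ∧ y ≠ v generalizing x y
    · rw [perm_apply_ne_comm]
      exact this y x (by rwa [G.symm]) (by tauto) hxy.symm (by grind)
    obtain ⟨hyu, hyv⟩ := hy
    by_cases hx : x = u ∨ x = v
    · have := (c.forall_contractEdge_left_iff hfv (x := ⟨u, huv⟩) (y := ⟨y, hyv⟩) rfl hyu).mp
        (hK _ _)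
      rcases hx with rfl | rfl
      exacts [this.1 j hj, this.2 j hj]
    · push Not at hx
      have := hK ⟨x, hx.2⟩ ⟨y, hyv⟩ j (by rwa [G.contractEdge_mult_of_ne hx.1 hyu])
      rwa [c.contractEdge_perm_of_ne hx.1 hyu] at this
  · intro hH x y j hj
    wlog hy : y.1 ≠ u generalizing x y
    · by_cases hx : x.1 = u
      · rw [G.contractEdge_mult_self hx (not_not.mp hy)] at hj
        exact absurd hj (Nat.not_lt_zero j)
      · rw [perm_apply_ne_comm]
        exact this y x (by rwa [(G.contractEdge u v).symm]) hx
    have hxv := x.2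
    have hyv := y.2
    by_cases hx : x.1 = u
    · refine (c.forall_contractEdge_left_iff hfv hx hy).mpr
        ⟨fun k hk => hH _ _ k hk ?_, fun k hk => hH _ _ k hk ?_⟩ j hj <;> tauto
    · rw [c.contractEdge_perm_of_ne hx hy]
      exact hH x y j (by rwa [G.contractEdge_mult_of_ne hx hy] at hj) (by tauto)

/-- A coloring of `G - e` using the matching edge of `e` avoids the parallel matchings
automatically, because no edge of theirs joins the same two list elements. -/
theorem isColoring_deleteEdge_iff_isColoring_contractEdge (hi : i < G.mult u v)
    (hdisj : ∀ j, j < G.mult u v → j ≠ i → ∀ a : Fin m, c.perm u v j a ≠ c.perm u v i a)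
    {f : V → Fin m} (hfv : c.perm u v i (f u) = f v) :
    (c.deleteEdge u v i).IsColoring f ↔ (c.contractEdge u v i).IsColoring (fun x => f x) := by
  rw [c.isColoring_deleteEdge_iff hi, c.isColoring_contractEdge_iff (G.ne_of_lt_mult hi) hfv]
  refine ⟨fun hf x y j hj hnp => hf x y j hj (absurd · hnp), fun hf x y j hj hji => ?_⟩
  by_cases hp : (x = u ∧ y = v) ∨ (x = v ∧ y = u)
  · have hparallel := hdisj j (G.mult_eq_of_pair hp ▸ hj) (hji hp) (f u)
    rw [hfv] at hparallel
    rcases hp with ⟨rfl, rfl⟩ | ⟨rfl, rfl⟩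
    exacts [hparallel, (c.perm_apply_ne_comm _ _ _ _ _).mpr hparallel]
  · exact hf x y j hj hp

def deleteEdgeColoringEquiv (hi : i < G.mult u v)
    (hdisj : ∀ j, j < G.mult u v → j ≠ i → ∀ a : Fin m, c.perm u v j a ≠ c.perm u v i a) :
    {f // (c.deleteEdge u v i).IsColoring f} ≃
      {g // (c.contractEdge u v i).IsColoring g} ⊕ {f // c.IsColoring f} :=
  (Equiv.sumCompl fun f : {f // (c.deleteEdge u v i).IsColoring f} =>
    c.perm u v i (f.1 u) = f.1 v).symm.trans <|
  Equiv.sumCongr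
    ((Equiv.subtypeSubtypeEquivSubtypeInter _ _).trans <|
      (Equiv.subtypeEquivRight fun _ => and_comm).trans <|
      (Equiv.subtypeSubtypeEquivSubtypeInter _ _).symm.trans <|
      Equiv.subtypeEquiv (Equiv.subtypeApplyEqEquivRestrict (G.ne_of_lt_mult hi) _)
        fun f => c.isColoring_deleteEdge_iff_isColoring_contractEdge hi hdisj f.2)
    ((Equiv.subtypeSubtypeEquivSubtypeInter _ _).trans <|
      Equiv.subtypeEquivRight fun f => (c.isColoring_iff_isColoring_deleteEdge hi f).symm)

theorem numColorings_deleteEdge [Finite V] (hi : i < G.mult u v)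
    (hdisj : ∀ j, j < G.mult u v → j ≠ i → ∀ a : Fin m, c.perm u v j a ≠ c.perm u v i a) :
    (c.deleteEdge u v i).numColorings =
      (c.contractEdge u v i).numColorings + c.numColorings := by
  rw [numColorings, Nat.card_congr (c.deleteEdgeColoringEquiv hi hdisj), Nat.card_sum]
  rfl

end FullCover

/-- Cover-level deletion-contraction equality: if `c` is a full `m`-fold cover
of `G`, `e` is the `i`-th edge joining `u` and `v`, and no other matching
between the lists of `u` and `v` shares an edge (as a pair of endpoints) with
the matching of `e`, then `P_DP(G,c) = P_DP(G-e, c-e) - P_DP(G·e, c·e)`. -/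
theorem numColorings_deletion_contraction_eq {V : Type} [Fintype V] [DecidableEq V]
    (G : Multigraph V) (m : ℕ) (c : FullCover G m)
    (u v : V) (i : ℕ) (hi : i < G.mult u v)
    (hdisj : ∀ j, j < G.mult u v → j ≠ i → ∀ a : Fin m,
      c.perm u v j a ≠ c.perm u v i a) :
    (c.numColorings : ℤ) =
      ((c.deleteEdge u v i).numColorings : ℤ) - (c.contractEdge u v i).numColorings := by
  rw [c.numColorings_deleteEdge hi hdisj]
  push_cast
  ring
end

section
/- For every m ≥ 2 and every odd n ≥ 3, P_DP(C_n,m) = (m-1)^n - (m-1) and P*_DP(C_n,m) = (m-1)^n + 1. -/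
/-- The cycle `C_n` on vertex set `Fin n`, as a multigraph: vertex `i` is joined
to vertex `i+1 (mod n)`.  In particular `C_2` consists of two vertices joined by
two parallel edges. -/
def cycleMultigraph (n : ℕ) : Multigraph (Fin n) where
  mult u v :=
    if u = v then 0
    else (Finset.univ.filter (fun i : Fin n =>
      (i = u ∧ (i.val + 1) % n = v.val) ∨ (i = v ∧ (i.val + 1) % n = u.val))).card
  symm := by
    intro u v
    try dsimp only
    by_cases h : u = v
    · rw [if_pos h, if_pos h.symm]
    · rw [if_neg h, if_neg (Ne.symm h)]
      congr 1
      apply Finset.filter_congr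
      intro i _
      constructor <;> (intro h'; tauto)
  loopless := by intro v; simp

/-!
Recolouring vertex `i` of `C_n` through the partial product `σ₀⁻¹ ⋯ σᵢ₋₁⁻¹` of the matchings
along the edges before it (switching) makes a full `m`-fold cover the identity on every edge but
the closing one, where it becomes the monodromy `π`. So the `H`-colourings are the proper
colourings of the path `0, …, n-1` with `π (g 0) ≠ g (n-1)`. Deleting the last vertex shows that
`Qₖ`, the number of path colourings with `π (g 0) = g k`, satisfies `Qₖ₊₁ + Qₖ = m (m-1)ᵏ` and
`Q₀ = m - |supp π|`, so a cover has `P(C_n, m) - (-1)ⁿ |supp π|` colourings. For odd `n` this lies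
between `(m-1)ⁿ - (m-1)` (attained at `π = 1`) and `(m-1)ⁿ + 1` (attained when `π` is a rotation
of the `m` colours, which has no fixed point).
-/

open Finset Fintype Equiv

section PathColorings

variable {α : Type*}

def IsPathColoring {k : ℕ} (g : Fin (k + 1) → α) : Prop :=
  ∀ i : Fin k, g i.castSucc ≠ g i.succ

instance [DecidableEq α] {k : ℕ} : DecidablePred (IsPathColoring (α := α) (k := k)) :=
  fun _ => Fintype.decidableForallFintype

theorem isPathColoring_snoc_iff {k : ℕ} {g : Fin (k + 1) → α} {x : α} :
    IsPathColoring (Fin.snoc g x : Fin (k + 2) → α) ↔ IsPathColoring g ∧ g (Fin.last k) ≠ x := by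
  simp only [IsPathColoring, Fin.forall_fin_succ' (n := k), Fin.succ_castSucc, Fin.snoc_castSucc,
    Fin.succ_last, Fin.snoc_last]

def monodromy {n : ℕ} (σ : Fin n → Perm α) : Perm α :=
  Fin.partialProd (fun i => (σ i)⁻¹) (Fin.last n)

theorem exists_monodromy_eq (k : ℕ) (π : Perm α) : ∃ σ : Fin (k + 1) → Perm α, monodromy σ = π :=
  ⟨Fin.cons π⁻¹ 1, by
    rw [monodromy, ← Fin.succ_last, Fin.partialProd_succ']
    simp [Fin.partialProd, Fin.tail_def]⟩

theorem perm_apply_ne_iff_mul_inv (a s : Perm α) (x y : α) : s x ≠ y ↔ a x ≠ (a * s⁻¹) y := by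
  simp [Perm.mul_apply, Equiv.eq_symm_apply]

variable [Fintype α]

theorem card_filter_fin_snoc {k : ℕ} (Q : (Fin (k + 2) → α) → Prop) [DecidablePred Q] :
    #{f | Q f} = ∑ g : Fin (k + 1) → α, #{x | Q (Fin.snoc g x)} := by
  simp only [Finset.card_filter]
  rw [← (Fin.snocEquiv fun _ => α).sum_comp, Fintype.sum_prod_type, Finset.sum_comm]
  rfl

variable [DecidableEq α]

theorem card_pathColorings (k : ℕ) :
    (#{g : Fin (k + 1) → α | IsPathColoring g} : ℤ) = card α * (card α - 1) ^ k := by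
  induction k with
  | zero => simp [IsPathColoring]
  | succ k ih =>
    rw [card_filter_fin_snoc, pow_succ, ← mul_assoc, ← ih, card_filter, Nat.cast_sum, Nat.cast_sum,
      sum_mul]
    refine sum_congr rfl fun g _ => ?_
    by_cases hg : IsPathColoring g
    · simp [isPathColoring_snoc_iff, hg, filter_ne, Nat.cast_sub (card_pos_iff.2 ⟨g 0⟩)]
    · simp [isPathColoring_snoc_iff, hg]

/-- The colour of the new last vertex is forced to be `π (g 0)`. -/
theorem card_closedPathColorings_succ (π : Perm α) (k : ℕ) :
    #{f : Fin (k + 2) → α | IsPathColoring f ∧ π (f 0) = f (Fin.last _)} =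
      #{g : Fin (k + 1) → α | IsPathColoring g ∧ π (g 0) ≠ g (Fin.last k)} := by
  rw [card_filter_fin_snoc, card_filter]
  refine sum_congr rfl fun g _ => ?_
  by_cases hg : IsPathColoring g <;> by_cases h : π (g 0) = g (Fin.last k) <;>
    simp [isPathColoring_snoc_iff, hg, h]
  rw [card_eq_one]
  exact ⟨π (g 0), by ext x; simp only [mem_filter, mem_univ, true_and, mem_singleton]; grind⟩

theorem card_closedPathColorings (π : Perm α) (k : ℕ) :
    (#{g : Fin (k + 1) → α | IsPathColoring g ∧ π (g 0) = g (Fin.last k)} : ℤ) =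
      (card α - 1) ^ k + (-1) ^ k * (card α - 1) - (-1) ^ k * #π.support := by
  induction k with
  | zero =>
    have hfix : #{g : Fin 1 → α | IsPathColoring g ∧ π (g 0) = g (Fin.last 0)} =
        #{x | π x = x} :=
      card_equiv (Equiv.funUnique (Fin 1) α) (by simp [IsPathColoring])
    have hsplit : (#{x | π x = x} : ℤ) + #π.support = card α := by
      exact_mod_cast card_filter_add_card_filter_not (s := univ) fun x => π x = x
    rw [hfix]
    linear_combination hsplit
  | succ k ih =>
    have hsplit := card_filter_add_card_filter_not (s := {g : Fin (k + 1) → α | IsPathColoring g})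
      fun g => π (g 0) = g (Fin.last k)
    simp only [filter_filter] at hsplit
    zify at hsplit
    rw [card_closedPathColorings_succ]
    linear_combination hsplit - ih + card_pathColorings (α := α) k

theorem card_cycleColorings_eq_twisted {k : ℕ} (σ : Fin (k + 1) → Perm α) :
    #{f : Fin (k + 1) → α | ∀ u, σ u (f u) ≠ f (u + 1)} =
      #{g | IsPathColoring g ∧ monodromy σ (g 0) ≠ g (Fin.last k)} := by
  refine card_equiv (Equiv.piCongrRight fun i => Fin.partialProd (fun j => (σ j)⁻¹) i.castSucc)
    fun f => ?_
  rw [mem_filter_univ, mem_filter_univ]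
  simp only [Equiv.piCongrRight_apply, Pi.map_apply, IsPathColoring,
    Fin.forall_fin_succ' (n := k), Fin.coeSucc_eq_succ, Fin.last_add_one]
  refine and_congr (forall_congr' fun i => ?_) ?_
  · rw [← Fin.succ_castSucc, Fin.partialProd_succ]
    exact perm_apply_ne_iff_mul_inv _ _ _ _
  · rw [Fin.castSucc_zero, Fin.partialProd_zero, monodromy, ← Fin.succ_last, Fin.partialProd_succ]
    exact (perm_apply_ne_iff_mul_inv _ _ _ _).trans ne_comm

theorem card_cycleColorings {k : ℕ} (σ : Fin (k + 1) → Perm α) :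
    (#{f : Fin (k + 1) → α | ∀ u, σ u (f u) ≠ f (u + 1)} : ℤ) =
      (card α - 1) ^ (k + 1) + (-1) ^ (k + 1) * (card α - 1) -
        (-1) ^ (k + 1) * #(monodromy σ).support := by
  rw [card_cycleColorings_eq_twisted, ← card_closedPathColorings_succ, card_closedPathColorings]

end PathColorings
theorem Fin.add_one_ne_self_of_two_le {n : ℕ} [NeZero n] (hn : 2 ≤ n) (u : Fin n) : u + 1 ≠ u := by
  rw [Ne, add_eq_left, Fin.ext_iff, Fin.val_one', Fin.val_zero, Nat.mod_eq_of_lt hn]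
  omega

theorem Fin.add_one_add_one_ne_self {n : ℕ} [NeZero n] (hn : 3 ≤ n) (u : Fin n) :
    u + 1 + 1 ≠ u := by
  rw [Ne, add_assoc, add_eq_left, Fin.ext_iff, Fin.val_add, Fin.val_one', Fin.val_zero,
    Nat.mod_eq_of_lt (by omega : 1 < n), Nat.mod_eq_of_lt (by omega : 1 + 1 < n)]
  omega

section Cycle

variable {n m : ℕ} [NeZero n]

theorem cycleMultigraph_mult (hn : 3 ≤ n) (u v : Fin n) :
    (cycleMultigraph n).mult u v = if v = u + 1 ∨ u = v + 1 then 1 else 0 := by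
  have hsucc (i w : Fin n) : (i.val + 1) % n = w.val ↔ w = i + 1 := by
    rw [Fin.ext_iff, Fin.val_add, Fin.val_one', Nat.add_mod_mod, eq_comm]
  have hloop := Fin.add_one_ne_self_of_two_le (by omega : 2 ≤ n)
  have hback := Fin.add_one_add_one_ne_self hn
  simp only [cycleMultigraph, hsucc]
  split_ifs with huv hadj hadj
  · subst huv; grind
  · rfl
  · rw [card_eq_one]
    rcases hadj with rfl | rfl
    · exact ⟨u, by ext i; simp only [mem_filter_univ, mem_singleton]; grind⟩
    · exact ⟨v, by ext i; simp only [mem_filter_univ, mem_singleton]; grind⟩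
  · rw [Finset.card_eq_zero, filter_eq_empty_iff]
    grind

theorem FullCover.isColoring_cycle_iff (hn : 3 ≤ n) (c : FullCover (cycleMultigraph n) m)
    (f : Fin n → Fin m) : c.IsColoring f ↔ ∀ u, c.perm u (u + 1) 0 (f u) ≠ f (u + 1) := by
  simp only [FullCover.IsColoring, cycleMultigraph_mult hn]
  refine ⟨fun h u => h u (u + 1) 0 (by simp), fun h u v i hi => ?_⟩
  split_ifs at hi with hadj
  · obtain rfl : i = 0 := by omega
    rcases hadj with rfl | rfl
    · exact h u
    · rw [c.compat, Ne, Equiv.symm_apply_eq]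
      exact (h v).symm
  · omega

def cycleCover (hn : 3 ≤ n) (σ : Fin n → Perm (Fin m)) : FullCover (cycleMultigraph n) m where
  perm u v _ := if v = u + 1 then σ u else if u = v + 1 then (σ v).symm else Equiv.refl _
  compat u v _ := by
    have hback (w : Fin n) : w ≠ w + 1 + 1 := (Fin.add_one_add_one_ne_self hn w).symm
    by_cases h₁ : u = v + 1 <;> by_cases h₂ : v = u + 1
    · exact absurd (h₂ ▸ h₁) (hback u)
    all_goals simp [h₁, h₂, hback]

theorem cycleCover_perm_add_one (hn : 3 ≤ n) (σ : Fin n → Perm (Fin m)) :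
    (fun u => (cycleCover hn σ).perm u (u + 1) 0) = σ :=
  funext fun _ => if_pos rfl

end Cycle

theorem FullCover.numColorings_cycle {k m : ℕ} (hn : 3 ≤ k + 1)
    (c : FullCover (cycleMultigraph (k + 1)) m) :
    (c.numColorings : ℤ) = ((m : ℤ) - 1) ^ (k + 1) + (-1) ^ (k + 1) * ((m : ℤ) - 1) -
      (-1) ^ (k + 1) * #(monodromy fun u => c.perm u (u + 1) 0).support := by
  classical
  rw [FullCover.numColorings, Nat.card_eq_fintype_card, Fintype.card_subtype]
  simp only [c.isColoring_cycle_iff hn]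
  rw [card_cycleColorings, Fintype.card_fin]

theorem FullCover.numColorings_cycle_of_odd {k m : ℕ} (hn : 3 ≤ k + 1) (hodd : Odd (k + 1))
    (c : FullCover (cycleMultigraph (k + 1)) m) :
    (c.numColorings : ℤ) = ((m : ℤ) - 1) ^ (k + 1) - ((m : ℤ) - 1) +
      #(monodromy fun u => c.perm u (u + 1) 0).support := by
  rw [c.numColorings_cycle hn, hodd.neg_one_pow]
  ring

theorem FullCover.numColorings_cycle_mem_Icc {k m : ℕ} (hn : 3 ≤ k + 1) (hodd : Odd (k + 1))
    (c : FullCover (cycleMultigraph (k + 1)) m) :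
    (c.numColorings : ℤ) ∈ Set.Icc (((m : ℤ) - 1) ^ (k + 1) - ((m : ℤ) - 1))
      (((m : ℤ) - 1) ^ (k + 1) + 1) := by
  have hs : #(monodromy fun u => c.perm u (u + 1) 0).support ≤ m :=
    (card_le_univ _).trans_eq (Fintype.card_fin m)
  zify at hs
  rw [c.numColorings_cycle_of_odd hn hodd]
  constructor <;> linarith

theorem Multigraph.PDP_eq_of_forall_le {V : Type} {G : Multigraph V} {m : ℕ} (c₀ : FullCover G m)
    (h : ∀ c : FullCover G m, c₀.numColorings ≤ c.numColorings) : G.PDP m = c₀.numColorings :=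
  IsLeast.csInf_eq ⟨⟨c₀, rfl⟩, by rintro _ ⟨c, rfl⟩; exact h c⟩

theorem Multigraph.PDPdual_eq_of_forall_le {V : Type} {G : Multigraph V} {m : ℕ}
    (c₀ : FullCover G m) (h : ∀ c : FullCover G m, c.numColorings ≤ c₀.numColorings) :
    G.PDPdual m = c₀.numColorings :=
  IsGreatest.csSup_eq ⟨⟨c₀, rfl⟩, by rintro _ ⟨c, rfl⟩; exact h c⟩

/-- For `m ≥ 2` and odd `n ≥ 3`, `P_DP(C_n,m) = (m-1)^n - (m-1)` and
`P*_DP(C_n,m) = (m-1)^n + 1`. -/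
theorem PDP_cycle_odd (n m : ℕ) (hn : 3 ≤ n) (hno : Odd n) (hm : 2 ≤ m) :
    ((cycleMultigraph n).PDP m : ℤ) = ((m : ℤ) - 1) ^ n - ((m : ℤ) - 1) ∧
      ((cycleMultigraph n).PDPdual m : ℤ) = ((m : ℤ) - 1) ^ n + 1 := by
  obtain ⟨k, rfl⟩ : ∃ k, n = k + 1 := ⟨n - 1, by omega⟩
  obtain ⟨σmin, hσmin⟩ := exists_monodromy_eq k (1 : Perm (Fin m))
  obtain ⟨σmax, hσmax⟩ := exists_monodromy_eq k (finRotate m)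
  have count_min := (cycleCover hn σmin).numColorings_cycle_of_odd hn hno
  have count_max := (cycleCover hn σmax).numColorings_cycle_of_odd hn hno
  rw [cycleCover_perm_add_one, hσmin, Perm.support_one, Finset.card_empty, Nat.cast_zero,
    add_zero] at count_min
  rw [cycleCover_perm_add_one, hσmax, support_finRotate_of_le hm, card_univ,
    Fintype.card_fin] at count_max
  constructor
  · rw [Multigraph.PDP_eq_of_forall_le (cycleCover hn σmin) fun c => ?_, count_min]
    zify
    linarith [(c.numColorings_cycle_mem_Icc hn hno).1]
  · rw [Multigraph.PDPdual_eq_of_forall_le (cycleCover hn σmax) fun c => ?_, count_max]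
    · ring
    · zify
      linarith [(c.numColorings_cycle_mem_Icc hn hno).2]
end
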